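/- arXiv:2212.04034 — 3 statements merged into one kernel-verified Lean document; each statement's English description precedes it below -/
import Mathlib

section
/- Let U ⊆ ℂ be open and φ : U → ℝ smooth. Define K := −2 e^{−2φ} ∂_z∂_{z̄}φ, Δ_g f := 2 e^{−2φ} ∂_z∂_{z̄} f, and the iterated covariant derivatives K_{;z̄z̄} := ∂_{z̄}²K − 2(∂_{z̄}φ)(∂_{z̄}K), K_{;z̄z̄z} := ∂_z K_{;z̄z̄}, K_{;z̄z̄zz} := ∂_z K_{;z̄z̄z} − 2(∂_zφ) K_{;z̄z̄z}. Then on all of U one has e^{−4φ} K_{;z̄z̄zz} = (1/4) Δ_g(Δ_g K) + (1/4) Δ_g(K²). -/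
/-!
Write `E = e^{-2φ}`. The Leibniz rule gives `∂(E f) = E (∂f - 2 ∂φ f)` and likewise for `∂_z̄`,
which produces exactly the Christoffel terms of the covariant derivatives. Commuting `∂_z̄`
past `∂` on `∂_z̄ K` and using `K = -2 E ∂∂_z̄ φ` gives `∂_z̄ (Δ_g K + K²) = 2 E K_{;z̄z̄z}`;
applying `∂` and the same rule once more gives `Δ_g (Δ_g K + K²) = 4 E² K_{;z̄z̄zz}`,
and `E² = e^{-4φ}`.
-/

open Complex
open scoped ContDiff

/-- Partial derivative in the `x`-direction (real coordinate). -/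
noncomputable def pdx (f : ℂ → ℂ) (z : ℂ) : ℂ := fderiv ℝ f z 1

/-- Partial derivative in the `y`-direction (real coordinate). -/
noncomputable def pdy (f : ℂ → ℂ) (z : ℂ) : ℂ := fderiv ℝ f z Complex.I

/-- Wirtinger derivative `∂_z = (1/2)(∂_x - i ∂_y)`. -/
noncomputable def pdz (f : ℂ → ℂ) (z : ℂ) : ℂ := (1/2) * (pdx f z - Complex.I * pdy f z)

/-- Wirtinger derivative `∂_z̄ = (1/2)(∂_x + i ∂_y)`. -/
noncomputable def pdzbar (f : ℂ → ℂ) (z : ℂ) : ℂ := (1/2) * (pdx f z + Complex.I * pdy f z)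

/-- The complexification of a real-valued function. -/
noncomputable def phiC (φ : ℂ → ℝ) : ℂ → ℂ := fun z => (φ z : ℂ)

/-- The Gauss curvature `K = -2 e^{-2φ} ∂_z ∂_z̄ φ` of the metric `g = 2 e^{2φ} |dz|²`. -/
noncomputable def gaussK (φ : ℂ → ℝ) : ℂ → ℂ := fun z =>
  (-2 : ℂ) * (Real.exp (-2 * φ z) : ℂ) * pdz (pdzbar (phiC φ)) z

/-- The Laplace–Beltrami operator `Δ_g f = 2 e^{-2φ} ∂_z ∂_z̄ f` of `g = 2 e^{2φ} |dz|²`. -/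
noncomputable def lapg (φ : ℂ → ℝ) (f : ℂ → ℂ) : ℂ → ℂ := fun z =>
  (2 : ℂ) * (Real.exp (-2 * φ z) : ℂ) * pdz (pdzbar f) z

/-- Second covariant derivative `K_{;z̄z̄} = ∂_z̄² K - 2 (∂_z̄ φ)(∂_z̄ K)`. -/
noncomputable def Kzb2 (φ : ℂ → ℝ) : ℂ → ℂ := fun z =>
  pdzbar (pdzbar (gaussK φ)) z - 2 * pdzbar (phiC φ) z * pdzbar (gaussK φ) z

/-- Third covariant derivative `K_{;z̄z̄z} = ∂_z K_{;z̄z̄}`. -/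
noncomputable def Kzb2z (φ : ℂ → ℝ) : ℂ → ℂ := fun z => pdz (Kzb2 φ) z

/-- Fourth covariant derivative `K_{;z̄z̄zz} = ∂_z K_{;z̄z̄z} - 2 (∂_z φ) K_{;z̄z̄z}`. -/
noncomputable def Kzb2z2 (φ : ℂ → ℝ) : ℂ → ℂ := fun z =>
  pdz (Kzb2z φ) z - 2 * pdz (phiC φ) z * Kzb2z φ z

/-- The Euclidean Laplacian `Δ = ∂_x² + ∂_y²` on real-valued functions on `ℂ ≅ ℝ²`. -/
noncomputable def lapR (f : ℂ → ℝ) : ℂ → ℝ := fun z =>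
  fderiv ℝ (fun w => fderiv ℝ f w 1) z 1 + fderiv ℝ (fun w => fderiv ℝ f w Complex.I) z Complex.I

open Topology Filter

section Wirtinger

variable {f g : ℂ → ℂ} {z : ℂ}

lemma pdz_congr (h : f =ᶠ[𝓝 z] g) : pdz f z = pdz g z := by
  simp only [pdz, pdx, pdy, h.fderiv_eq]

lemma pdz_add (hf : DifferentiableAt ℝ f z) (hg : DifferentiableAt ℝ g z) :
    pdz (fun w => f w + g w) z = pdz f z + pdz g z := by
  simp only [pdz, pdx, pdy, fderiv_fun_add hf hg, add_apply]
  ring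

lemma pdz_sub (hf : DifferentiableAt ℝ f z) (hg : DifferentiableAt ℝ g z) :
    pdz (fun w => f w - g w) z = pdz f z - pdz g z := by
  simp only [pdz, pdx, pdy, fderiv_fun_sub hf hg, sub_apply]
  ring

lemma pdz_const_mul (c : ℂ) (hf : DifferentiableAt ℝ f z) :
    pdz (fun w => c * f w) z = c * pdz f z := by
  simp only [pdz, pdx, pdy, fderiv_const_mul hf, smul_apply, smul_eq_mul]
  ring

lemma pdz_mul (hf : DifferentiableAt ℝ f z) (hg : DifferentiableAt ℝ g z) :
    pdz (fun w => f w * g w) z = pdz f z * g z + f z * pdz g z := by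
  simp only [pdz, pdx, pdy, fderiv_fun_mul hf hg, add_apply, smul_apply, smul_eq_mul]
  ring

lemma pdz_cexp (hf : DifferentiableAt ℝ f z) :
    pdz (fun w => Complex.exp (f w)) z = Complex.exp (f z) * pdz f z := by
  simp only [pdz, pdx, pdy, hf.hasFDerivAt.cexp.fderiv, smul_apply,
    smul_eq_mul]
  ring

lemma pdzbar_sub (hf : DifferentiableAt ℝ f z) (hg : DifferentiableAt ℝ g z) :
    pdzbar (fun w => f w - g w) z = pdzbar f z - pdzbar g z := by
  simp only [pdzbar, pdx, pdy, fderiv_fun_sub hf hg, sub_apply]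
  ring

lemma pdzbar_const_mul (c : ℂ) (hf : DifferentiableAt ℝ f z) :
    pdzbar (fun w => c * f w) z = c * pdzbar f z := by
  simp only [pdzbar, pdx, pdy, fderiv_const_mul hf, smul_apply, smul_eq_mul]
  ring

lemma pdzbar_mul (hf : DifferentiableAt ℝ f z) (hg : DifferentiableAt ℝ g z) :
    pdzbar (fun w => f w * g w) z = pdzbar f z * g z + f z * pdzbar g z := by
  simp only [pdzbar, pdx, pdy, fderiv_fun_mul hf hg, add_apply, smul_apply, smul_eq_mul]
  ring

lemma pdzbar_cexp (hf : DifferentiableAt ℝ f z) :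
    pdzbar (fun w => Complex.exp (f w)) z = Complex.exp (f z) * pdzbar f z := by
  simp only [pdzbar, pdx, pdy, hf.hasFDerivAt.cexp.fderiv, smul_apply,
    smul_eq_mul]
  ring

lemma pdzbar_sq (hf : DifferentiableAt ℝ f z) :
    pdzbar (fun w => f w ^ 2) z = 2 * f z * pdzbar f z := by
  simp only [sq, pdzbar_mul hf hf]
  ring

lemma differentiableAt_pdx (hf : ContDiffAt ℝ 2 f z) : DifferentiableAt ℝ (pdx f) z :=
  ((hf.fderiv_right (m := 1) le_rfl).differentiableAt one_ne_zero).clm_apply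
    (differentiableAt_const _)

lemma differentiableAt_pdy (hf : ContDiffAt ℝ 2 f z) : DifferentiableAt ℝ (pdy f) z :=
  ((hf.fderiv_right (m := 1) le_rfl).differentiableAt one_ne_zero).clm_apply
    (differentiableAt_const _)

lemma pdy_pdx_comm (hf : ContDiffAt ℝ 2 f z) : pdy (pdx f) z = pdx (pdy f) z := by
  have hdf := (hf.fderiv_right (m := 1) le_rfl).differentiableAt one_ne_zero
  have hsymm := hf.isSymmSndFDerivAt (by simp [minSmoothness_of_isRCLikeNormedField])
  have hcurry (v : ℂ) :
      fderiv ℝ (fun w => fderiv ℝ f w v) z = (fderiv ℝ (fderiv ℝ f) z).flip v := by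
    simp [fderiv_clm_apply hdf (differentiableAt_const v)]
  change fderiv ℝ (fun w => fderiv ℝ f w 1) z I = fderiv ℝ (fun w => fderiv ℝ f w I) z 1
  rw [hcurry, hcurry]
  exact hsymm _ _

lemma pdz_pdzbar_comm (hf : ContDiffAt ℝ 2 f z) : pdz (pdzbar f) z = pdzbar (pdz f) z := by
  have hx := differentiableAt_pdx hf
  have hy := differentiableAt_pdy hf
  have hIy := hy.const_mul I
  calc pdz (pdzbar f) z = 1 / 2 * (pdz (pdx f) z + I * pdz (pdy f) z) := by
        rw [show pdzbar f = fun w => 1 / 2 * (pdx f w + I * pdy f w) from rfl,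
          pdz_const_mul _ (hx.fun_add hIy), pdz_add hx hIy, pdz_const_mul _ hy]
    _ = 1 / 2 * (pdzbar (pdx f) z - I * pdzbar (pdy f) z) := by
        simp only [pdz, pdzbar, pdy_pdx_comm hf]
        ring
    _ = pdzbar (pdz f) z := by
        rw [show pdz f = fun w => 1 / 2 * (pdx f w - I * pdy f w) from rfl,
          pdzbar_const_mul _ (hx.fun_sub hIy), pdzbar_sub hx hIy, pdzbar_const_mul _ hy]

end Wirtinger

section Smoothness

variable {U : Set ℂ} {f : ℂ → ℂ} {z : ℂ}

lemma differentiableAt_of_contDiffOn (hU : IsOpen U) (hf : ContDiffOn ℝ ∞ f U) (hz : z ∈ U) :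
    DifferentiableAt ℝ f z :=
  (hf.contDiffAt (hU.mem_nhds hz)).differentiableAt (by simp)

lemma contDiffOn_pdx (hU : IsOpen U) (hf : ContDiffOn ℝ ∞ f U) : ContDiffOn ℝ ∞ (pdx f) U :=
  (hf.fderiv_of_isOpen hU le_rfl).clm_apply contDiffOn_const

lemma contDiffOn_pdy (hU : IsOpen U) (hf : ContDiffOn ℝ ∞ f U) : ContDiffOn ℝ ∞ (pdy f) U :=
  (hf.fderiv_of_isOpen hU le_rfl).clm_apply contDiffOn_const

lemma contDiffOn_pdz (hU : IsOpen U) (hf : ContDiffOn ℝ ∞ f U) : ContDiffOn ℝ ∞ (pdz f) U :=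
  contDiffOn_const.mul ((contDiffOn_pdx hU hf).sub (contDiffOn_const.mul (contDiffOn_pdy hU hf)))

lemma contDiffOn_pdzbar (hU : IsOpen U) (hf : ContDiffOn ℝ ∞ f U) :
    ContDiffOn ℝ ∞ (pdzbar f) U :=
  contDiffOn_const.mul ((contDiffOn_pdx hU hf).add (contDiffOn_const.mul (contDiffOn_pdy hU hf)))

end Smoothness

noncomputable def expNegTwoPhi (φ : ℂ → ℝ) : ℂ → ℂ := fun z => (Real.exp (-2 * φ z) : ℂ)

section ConformalFactor

variable {U : Set ℂ} {φ : ℂ → ℝ} {f : ℂ → ℂ} {z : ℂ}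

lemma expNegTwoPhi_eq_cexp : expNegTwoPhi φ = fun w => Complex.exp (-2 * phiC φ w) := by
  ext w
  simp [expNegTwoPhi, phiC]

lemma ofReal_exp_neg_four_mul : (Real.exp (-4 * φ z) : ℂ) = expNegTwoPhi φ z ^ 2 := by
  rw [expNegTwoPhi, ← Complex.ofReal_pow, ← Real.exp_nat_mul]
  ring_nf

lemma lapg_eq : lapg φ f = fun w => 2 * expNegTwoPhi φ w * pdz (pdzbar f) w := rfl

lemma gaussK_eq : gaussK φ z = -2 * expNegTwoPhi φ z * pdz (pdzbar (phiC φ)) z := rfl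

lemma contDiffOn_phiC (hφ : ContDiffOn ℝ ∞ φ U) : ContDiffOn ℝ ∞ (phiC φ) U :=
  Complex.ofRealCLM.contDiff.comp_contDiffOn hφ

lemma contDiffOn_expNegTwoPhi (hφ : ContDiffOn ℝ ∞ φ U) : ContDiffOn ℝ ∞ (expNegTwoPhi φ) U := by
  rw [expNegTwoPhi_eq_cexp]
  exact Complex.contDiff_exp.comp_contDiffOn (contDiffOn_const.mul (contDiffOn_phiC hφ))

lemma contDiffOn_gaussK (hU : IsOpen U) (hφ : ContDiffOn ℝ ∞ φ U) :
    ContDiffOn ℝ ∞ (gaussK φ) U :=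
  (contDiffOn_const.mul (contDiffOn_expNegTwoPhi hφ)).mul
    (contDiffOn_pdz hU (contDiffOn_pdzbar hU (contDiffOn_phiC hφ)))

lemma contDiffOn_lapg (hU : IsOpen U) (hφ : ContDiffOn ℝ ∞ φ U) (hf : ContDiffOn ℝ ∞ f U) :
    ContDiffOn ℝ ∞ (lapg φ f) U :=
  (contDiffOn_const.mul (contDiffOn_expNegTwoPhi hφ)).mul
    (contDiffOn_pdz hU (contDiffOn_pdzbar hU hf))

lemma contDiffOn_Kzb2z (hU : IsOpen U) (hφ : ContDiffOn ℝ ∞ φ U) :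
    ContDiffOn ℝ ∞ (Kzb2z φ) U := by
  have hK := contDiffOn_pdzbar hU (contDiffOn_gaussK hU hφ)
  exact contDiffOn_pdz hU ((contDiffOn_pdzbar hU hK).sub
    ((contDiffOn_const.mul (contDiffOn_pdzbar hU (contDiffOn_phiC hφ))).mul hK))

lemma pdz_expNegTwoPhi_mul (c : ℂ) (hφ : DifferentiableAt ℝ (phiC φ) z)
    (hf : DifferentiableAt ℝ f z) :
    pdz (fun w => c * expNegTwoPhi φ w * f w) z
      = c * expNegTwoPhi φ z * (pdz f z - 2 * pdz (phiC φ) z * f z) := by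
  have hexp : DifferentiableAt ℝ (fun w => Complex.exp (-2 * phiC φ w)) z :=
    (hφ.const_mul _).cexp
  rw [expNegTwoPhi_eq_cexp, pdz_mul (hexp.const_mul c) hf, pdz_const_mul c hexp,
    pdz_cexp (hφ.const_mul _), pdz_const_mul _ hφ]
  ring

lemma pdzbar_expNegTwoPhi_mul (c : ℂ) (hφ : DifferentiableAt ℝ (phiC φ) z)
    (hf : DifferentiableAt ℝ f z) :
    pdzbar (fun w => c * expNegTwoPhi φ w * f w) z
      = c * expNegTwoPhi φ z * (pdzbar f z - 2 * pdzbar (phiC φ) z * f z) := by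
  have hexp : DifferentiableAt ℝ (fun w => Complex.exp (-2 * phiC φ w)) z :=
    (hφ.const_mul _).cexp
  rw [expNegTwoPhi_eq_cexp, pdzbar_mul (hexp.const_mul c) hf, pdzbar_const_mul c hexp,
    pdzbar_cexp (hφ.const_mul _), pdzbar_const_mul _ hφ]
  ring

end ConformalFactor

section Curvature

variable {U : Set ℂ} {φ : ℂ → ℝ} {z : ℂ}

lemma Kzb2z_eq (hU : IsOpen U) (hφ : ContDiffOn ℝ ∞ φ U) (hz : z ∈ U) :
    Kzb2z φ z = pdz (pdzbar (pdzbar (gaussK φ))) z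
      - 2 * pdz (pdzbar (phiC φ)) z * pdzbar (gaussK φ) z
      - 2 * pdzbar (phiC φ) z * pdz (pdzbar (gaussK φ)) z := by
  have hK := contDiffOn_pdzbar hU (contDiffOn_gaussK hU hφ)
  have hKK := differentiableAt_of_contDiffOn hU (contDiffOn_pdzbar hU hK) hz
  have hK' := differentiableAt_of_contDiffOn hU hK hz
  have hQ := differentiableAt_of_contDiffOn hU (contDiffOn_pdzbar hU (contDiffOn_phiC hφ)) hz
  rw [Kzb2z]
  unfold Kzb2
  rw [pdz_sub hKK ((hQ.const_mul 2).fun_mul hK'), pdz_mul (hQ.const_mul 2) hK',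
    pdz_const_mul 2 hQ]
  ring

lemma pdzbar_lapg_gaussK_add_pdzbar_sq (hU : IsOpen U) (hφ : ContDiffOn ℝ ∞ φ U) (hz : z ∈ U) :
    pdzbar (lapg φ (gaussK φ)) z + pdzbar (fun w => gaussK φ w ^ 2) z
      = 2 * expNegTwoPhi φ z * Kzb2z φ z := by
  have hK := contDiffOn_gaussK hU hφ
  have hKz := contDiffOn_pdzbar hU hK
  rw [lapg_eq, pdzbar_expNegTwoPhi_mul 2
      (differentiableAt_of_contDiffOn hU (contDiffOn_phiC hφ) hz)
      (differentiableAt_of_contDiffOn hU (contDiffOn_pdz hU hKz) hz),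
    ← pdz_pdzbar_comm ((hKz.contDiffAt (hU.mem_nhds hz)).of_le (by norm_cast)),
    pdzbar_sq (differentiableAt_of_contDiffOn hU hK hz), Kzb2z_eq hU hφ hz, gaussK_eq]
  ring

end Curvature

/-- Lemma 4.3 of the paper: for smooth real `φ` on open `U ⊆ ℂ`, with
`K = -2 e^{-2φ} ∂_z∂_z̄ φ`, one has `e^{-4φ} K_{;z̄z̄zz} = (1/4) Δ_g² K + (1/4) Δ_g K²` on `U`. -/
theorem obstruction_identity (U : Set ℂ) (hU : IsOpen U) (φ : ℂ → ℝ)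
    (hφ : ContDiffOn ℝ ∞ φ U) :
    ∀ z ∈ U,
      (Real.exp (-4 * φ z) : ℂ) * Kzb2z2 φ z
        = (1/4) * lapg φ (lapg φ (gaussK φ)) z
            + (1/4) * lapg φ (fun w => (gaussK φ w) ^ 2) z := by
  intro z hz
  have hK := contDiffOn_gaussK hU hφ
  have hsum : pdz (fun w => pdzbar (lapg φ (gaussK φ)) w + pdzbar (fun w => gaussK φ w ^ 2) w) z
      = pdz (fun w => 2 * expNegTwoPhi φ w * Kzb2z φ w) z :=
    pdz_congr (eventuallyEq_of_mem (hU.mem_nhds hz)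
      fun w hw => pdzbar_lapg_gaussK_add_pdzbar_sq hU hφ hw)
  rw [pdz_add
      (differentiableAt_of_contDiffOn hU (contDiffOn_pdzbar hU (contDiffOn_lapg hU hφ hK)) hz)
      (differentiableAt_of_contDiffOn hU (contDiffOn_pdzbar hU (hK.pow 2)) hz),
    pdz_expNegTwoPhi_mul 2 (differentiableAt_of_contDiffOn hU (contDiffOn_phiC hφ) hz)
      (differentiableAt_of_contDiffOn hU (contDiffOn_Kzb2z hU hφ) hz)] at hsum
  have hlapg (f : ℂ → ℂ) : lapg φ f z = 2 * expNegTwoPhi φ z * pdz (pdzbar f) z := rfl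
  rw [ofReal_exp_neg_four_mul, Kzb2z2, hlapg, hlapg]
  linear_combination -(expNegTwoPhi φ z / 2) * hsum
end

section
/- Let U ⊆ ℂ ≅ ℝ² be a connected open neighborhood of 0 and let φ₁, φ₂ : U → ℝ be real analytic functions, both satisfying Δ( e^{−2φ} Δ( e^{−2φ} Δφ ) ) − Δ( e^{−4φ} (Δφ)² ) = 0 on U. If there is an open interval I ∋ 0 with I × {0} ⊆ U such that ∂_y^j φ₁ (x, 0) = ∂_y^j φ₂ (x, 0) for all x ∈ I and all j = 0, 1, …, 5, then φ₁ = φ₂ on some open neighborhood of 0. -/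
open Complex
open scoped ContDiff

/-- The sixth-order obstruction-flatness PDE operator
`Δ(e^{-2φ} Δ(e^{-2φ} Δφ)) - Δ(e^{-4φ} (Δφ)²)` (equation (4.8) of the paper). -/
noncomputable def obsPDE (φ : ℂ → ℝ) : ℂ → ℝ := fun z =>
  lapR (fun w => Real.exp (-2 * φ w) * lapR (fun u => Real.exp (-2 * φ u) * lapR φ u) w) z
    - lapR (fun w => Real.exp (-4 * φ w) * (lapR φ w) ^ 2) z

/-- Partial derivative in the `y`-direction for real-valued functions on `ℂ ≅ ℝ²`. -/
noncomputable def pdyR (f : ℂ → ℝ) : ℂ → ℝ := fun z => fderiv ℝ f z Complex.I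


/-!
On the line `y = 0` the Cauchy data determine every jet `∂ₓᵃ ∂ᵧᵇ φ`: for `b < 6` by
differentiating the data along the line, and for `b ≥ 6` by induction on `b`, because the
equation is linear in `∂ᵧ⁶ φ` with the nonvanishing coefficient `e^{-4φ}`, so it can be solved for
`∂ᵧ⁶ φ` as an expression in jets of `y`-order at most `5`, and differentiating that relation
expresses each higher jet through jets of lower `y`-order. Hence `φ₁` and `φ₂` have the same
Taylor series at `0`, and being real analytic they agree near `0`.
-/

open Set Filter Topology

section DirDeriv

variable {E F : Type*} [NormedAddCommGroup E] [NormedSpace ℝ E] [NormedAddCommGroup F]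
  [NormedSpace ℝ F] {U : Set E} {f g : E → F} {z : E}

noncomputable def dirDeriv (v : E) (f : E → F) : E → F := fun z => fderiv ℝ f z v

theorem eqOn_dirDeriv (hU : IsOpen U) (h : EqOn f g U) (v : E) :
    EqOn (dirDeriv v f) (dirDeriv v g) U := fun z hz => by
  simp only [dirDeriv, (h.eventuallyEq_of_mem (hU.mem_nhds hz)).fderiv_eq]

theorem eqOn_iterate_dirDeriv (hU : IsOpen U) (h : EqOn f g U) (v : E) (n : ℕ) :
    EqOn ((dirDeriv v)^[n] f) ((dirDeriv v)^[n] g) U := by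
  induction n with
  | zero => exact h
  | succ n ih => simpa only [Function.iterate_succ_apply'] using eqOn_dirDeriv hU ih v

theorem dirDeriv_const (v : E) (c : F) (z : E) : dirDeriv v (fun _ => c) z = 0 := by
  simp [dirDeriv]

section RealValued

variable {f g : E → ℝ}

theorem dirDeriv_add (hf : DifferentiableAt ℝ f z) (hg : DifferentiableAt ℝ g z) (v : E) :
    dirDeriv v (fun w => f w + g w) z = dirDeriv v f z + dirDeriv v g z := by
  simp [dirDeriv, fderiv_fun_add hf hg]

theorem dirDeriv_mul (hf : DifferentiableAt ℝ f z) (hg : DifferentiableAt ℝ g z) (v : E) :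
    dirDeriv v (fun w => f w * g w) z = dirDeriv v f z * g z + f z * dirDeriv v g z := by
  simp [dirDeriv, fderiv_fun_mul hf hg]
  ring

theorem dirDeriv_exp (hf : DifferentiableAt ℝ f z) (v : E) :
    dirDeriv v (fun w => Real.exp (f w)) z = Real.exp (f z) * dirDeriv v f z := by
  simp [dirDeriv, _root_.fderiv_exp hf]

end RealValued

variable [CompleteSpace F]

theorem analyticOnNhd_dirDeriv (hf : AnalyticOnNhd ℝ f U) (v : E) :
    AnalyticOnNhd ℝ (dirDeriv v f) U := fun z hz =>
  ((ContinuousLinearMap.apply ℝ F v).analyticAt _).comp (hf.fderiv z hz)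

theorem analyticOnNhd_iterate_dirDeriv (hf : AnalyticOnNhd ℝ f U) (v : E) (n : ℕ) :
    AnalyticOnNhd ℝ ((dirDeriv v)^[n] f) U :=
  Function.Iterate.rec (AnalyticOnNhd ℝ · U) hf (fun _ h => analyticOnNhd_dirDeriv h v) n

theorem AnalyticAt.dirDeriv_comm (hf : AnalyticAt ℝ f z) (v w : E) :
    dirDeriv w (dirDeriv v f) z = dirDeriv v (dirDeriv w f) z := by
  have hdf : DifferentiableAt ℝ (fderiv ℝ f) z := hf.fderiv.differentiableAt
  have hsymm : IsSymmSndFDerivAt ℝ f z :=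
    hf.contDiffAt.isSymmSndFDerivAt (n := 2) (by simp [minSmoothness_of_isRCLikeNormedField])
  have happly : ∀ v w, dirDeriv w (dirDeriv v f) z = fderiv ℝ (fderiv ℝ f) z w v := fun v w => by
    change fderiv ℝ (fun u => fderiv ℝ f u v) z w = _
    rw [fderiv_clm_apply hdf (differentiableAt_const v)]
    simp
  rw [happly, happly, hsymm]

theorem AnalyticOnNhd.dirDeriv_iterate_comm (hU : IsOpen U) (hf : AnalyticOnNhd ℝ f U)
    (v w : E) (n : ℕ) :
    EqOn (dirDeriv w ((dirDeriv v)^[n] f)) ((dirDeriv v)^[n] (dirDeriv w f)) U := by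
  induction n generalizing f with
  | zero => exact fun _ _ => rfl
  | succ n ih =>
    intro z hz
    have hcomm : EqOn (dirDeriv w (dirDeriv v f)) (dirDeriv v (dirDeriv w f)) U :=
      fun z hz => (hf z hz).dirDeriv_comm v w
    rw [Function.iterate_succ_apply, ih (analyticOnNhd_dirDeriv hf v) hz,
      eqOn_iterate_dirDeriv hU hcomm v n hz, ← Function.iterate_succ_apply]

theorem AnalyticOnNhd.iteratedFDeriv_apply_const (hU : IsOpen U) (hf : AnalyticOnNhd ℝ f U)
    (v : E) (n : ℕ) :
    EqOn (fun z => iteratedFDeriv ℝ n f z fun _ => v) ((dirDeriv v)^[n] f) U := by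
  induction n with
  | zero => intro z _; simp
  | succ n ih =>
    intro z hz
    have hdiff : DifferentiableAt ℝ (iteratedFDeriv ℝ n f) z :=
      ((hf.iteratedFDeriv n) z hz).differentiableAt
    calc iteratedFDeriv ℝ (n + 1) f z (fun _ => v)
        = fderiv ℝ (iteratedFDeriv ℝ n f) z v fun _ => v := iteratedFDeriv_succ_apply_left _
      _ = dirDeriv v (fun z => iteratedFDeriv ℝ n f z fun _ => v) z :=
        (fderiv_continuousMultilinear_apply_const_apply hdiff _ _).symm
      _ = (dirDeriv v)^[n + 1] f z := by
        rw [Function.iterate_succ_apply', eqOn_dirDeriv hU ih v hz]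

theorem AnalyticAt.eventuallyEq_of_iteratedFDeriv_apply_const_eq {x : E}
    (hf : AnalyticAt ℝ f x) (hg : AnalyticAt ℝ g x)
    (h : ∀ n v, (iteratedFDeriv ℝ n f x fun _ => v) = iteratedFDeriv ℝ n g x fun _ => v) :
    f =ᶠ[𝓝 x] g := by
  obtain ⟨p, r, hp⟩ := hf
  obtain ⟨q, s, hq⟩ := hg
  have hpq : ∀ n v, (p n fun _ => v) = q n fun _ => v := fun n v => by
    have := (hp.factorial_smul v n).trans ((h n v).trans (hq.factorial_smul v n).symm)
    rw [← Nat.cast_smul_eq_nsmul ℝ, ← Nat.cast_smul_eq_nsmul ℝ] at this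
    exact smul_right_injective F (Nat.cast_ne_zero.2 n.factorial_ne_zero) this
  filter_upwards [hp.hasFPowerSeriesAt.eventually_hasSum_sub,
    hq.hasFPowerSeriesAt.eventually_hasSum_sub] with y hpy hqy
  exact hpy.unique (by simpa only [hpq] using hqy)

end DirDeriv

section Plane

variable {F : Type*} [NormedAddCommGroup F] [NormedSpace ℝ F]

theorem dirDeriv_one_eq_deriv_ofReal {g : ℂ → F} {x : ℝ} (hg : DifferentiableAt ℝ g x) :
    dirDeriv 1 g x = deriv (fun t : ℝ => g t) x := by
  have := hg.hasFDerivAt.comp_hasDerivAt x Complex.ofRealCLM.hasDerivAt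
  simpa [dirDeriv, Function.comp_def] using this.deriv.symm

theorem dirDeriv_one_eq_of_eqOn_ofReal {I : Set ℝ} (hI : IsOpen I) {g₁ g₂ : ℂ → F}
    (h : ∀ t ∈ I, g₁ t = g₂ t) {x : ℝ} (hx : x ∈ I) (hg₁ : DifferentiableAt ℝ g₁ x)
    (hg₂ : DifferentiableAt ℝ g₂ x) : dirDeriv 1 g₁ x = dirDeriv 1 g₂ x := by
  rw [dirDeriv_one_eq_deriv_ofReal hg₁, dirDeriv_one_eq_deriv_ofReal hg₂]
  exact Filter.EventuallyEq.deriv_eq (eventually_of_mem (hI.mem_nhds hx) h)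

theorem dirDeriv_eq_re_mul_add_im_mul (g : ℂ → ℝ) (v z : ℂ) :
    dirDeriv v g z = v.re * dirDeriv 1 g z + v.im * dirDeriv Complex.I g z := by
  conv_lhs => rw [show v = v.re • (1 : ℂ) + v.im • Complex.I by simp [Complex.real_smul]]
  simp only [dirDeriv, map_add, map_smul, smul_eq_mul]

end Plane

noncomputable def jet (a b : ℕ) (φ : ℂ → ℝ) : ℂ → ℝ :=
  (dirDeriv 1)^[a] ((dirDeriv Complex.I)^[b] φ)

section Jet

variable {U : Set ℂ} {φ : ℂ → ℝ}

theorem AnalyticOnNhd.jet (hφ : AnalyticOnNhd ℝ φ U) (a b : ℕ) :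
    AnalyticOnNhd ℝ (jet a b φ) U :=
  analyticOnNhd_iterate_dirDeriv (analyticOnNhd_iterate_dirDeriv hφ _ b) 1 a

theorem dirDeriv_one_jet (a b : ℕ) (φ : ℂ → ℝ) : dirDeriv 1 (jet a b φ) = jet (a + 1) b φ :=
  (Function.iterate_succ_apply' _ a _).symm

theorem dirDeriv_I_jet (hU : IsOpen U) (hφ : AnalyticOnNhd ℝ φ U) (a b : ℕ) :
    EqOn (dirDeriv Complex.I (jet a b φ)) (jet a (b + 1) φ) U := fun z hz => by
  rw [jet, (analyticOnNhd_iterate_dirDeriv hφ _ b).dirDeriv_iterate_comm hU 1 Complex.I a hz,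
    ← Function.iterate_succ_apply' (dirDeriv Complex.I)]
  rfl

end Jet

inductive JetExpr where
  | jet (a b : ℕ)
  | const (c : ℝ)
  | add (e₁ e₂ : JetExpr)
  | mul (e₁ e₂ : JetExpr)
  | exp (e : JetExpr)

namespace JetExpr

noncomputable def eval (J : ℕ → ℕ → ℝ) : JetExpr → ℝ
  | jet a b => J a b
  | const c => c
  | add e₁ e₂ => eval J e₁ + eval J e₂
  | mul e₁ e₂ => eval J e₁ * eval J e₂
  | exp e => Real.exp (eval J e)

def derive (d : ℕ → ℕ → JetExpr) : JetExpr → JetExpr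
  | jet a b => d a b
  | const _ => const 0
  | add e₁ e₂ => add (derive d e₁) (derive d e₂)
  | mul e₁ e₂ => add (mul (derive d e₁) e₂) (mul e₁ (derive d e₂))
  | exp e => mul (exp e) (derive d e)

def dx : JetExpr → JetExpr := derive fun a b => jet (a + 1) b

def dy : JetExpr → JetExpr := derive fun a b => jet a (b + 1)

def dDir (v : ℂ) : JetExpr → JetExpr :=
  derive fun a b => add (mul (const v.re) (jet (a + 1) b)) (mul (const v.im) (jet a (b + 1)))

def lap (e : JetExpr) : JetExpr := add (dx (dx e)) (dy (dy e))

def yOrder : JetExpr → ℕ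
  | jet _ b => b
  | const _ => 0
  | add e₁ e₂ => max (yOrder e₁) (yOrder e₂)
  | mul e₁ e₂ => max (yOrder e₁) (yOrder e₂)
  | exp e => yOrder e

def truncY (k : ℕ) : JetExpr → JetExpr
  | jet a b => if b ≤ k then jet a b else const 0
  | const c => const c
  | add e₁ e₂ => add (truncY k e₁) (truncY k e₂)
  | mul e₁ e₂ => mul (truncY k e₁) (truncY k e₂)
  | exp e => exp (truncY k e)

theorem yOrder_truncY_le (k : ℕ) (e : JetExpr) : (truncY k e).yOrder ≤ k := by
  induction e with
  | jet a b => by_cases h : b ≤ k <;> simp [truncY, yOrder, h]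
  | _ => simp_all [truncY, yOrder]

theorem yOrder_derive_le {d : ℕ → ℕ → JetExpr} {s : ℕ} (hd : ∀ a b, (d a b).yOrder ≤ b + s)
    (e : JetExpr) : (derive d e).yOrder ≤ e.yOrder + s := by
  induction e with
  | jet a b => exact hd a b
  | _ => simp only [derive, yOrder] at *; omega

theorem yOrder_iterate_derive_le {d : ℕ → ℕ → JetExpr} {s : ℕ}
    (hd : ∀ a b, (d a b).yOrder ≤ b + s) (e : JetExpr) (n : ℕ) :
    ((derive d)^[n] e).yOrder ≤ e.yOrder + n * s := by
  induction n with
  | zero => simp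
  | succ n ih =>
    rw [Function.iterate_succ_apply']
    have := yOrder_derive_le hd ((derive d)^[n] e)
    rw [Nat.succ_mul]
    omega

theorem yOrder_iterate_dx_le (e : JetExpr) (n : ℕ) : (dx^[n] e).yOrder ≤ e.yOrder := by
  simpa [dx] using yOrder_iterate_derive_le (s := 0) (fun _ _ => le_rfl) e n

theorem yOrder_iterate_dy_le (e : JetExpr) (n : ℕ) : (dy^[n] e).yOrder ≤ e.yOrder + n := by
  simpa [dy] using yOrder_iterate_derive_le (s := 1) (fun _ _ => le_rfl) e n

theorem eval_congr_of_yOrder_le {J₁ J₂ : ℕ → ℕ → ℝ} {N : ℕ} {e : JetExpr} (he : e.yOrder ≤ N)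
    (h : ∀ a b, b ≤ N → J₁ a b = J₂ a b) : e.eval J₁ = e.eval J₂ := by
  induction e with
  | jet a b => exact h a b he
  | const c => rfl
  | add e₁ e₂ ih₁ ih₂ =>
    simp only [yOrder, max_le_iff] at he
    simp only [eval, ih₁ he.1, ih₂ he.2]
  | mul e₁ e₂ ih₁ ih₂ =>
    simp only [yOrder, max_le_iff] at he
    simp only [eval, ih₁ he.1, ih₂ he.2]
  | exp e ih => simp only [eval, ih he]

noncomputable def evalJets (e : JetExpr) (φ : ℂ → ℝ) : ℂ → ℝ := fun z =>
  e.eval fun a b => _root_.jet a b φ z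

variable {U : Set ℂ} {φ : ℂ → ℝ}

theorem analyticOnNhd_evalJets (hφ : AnalyticOnNhd ℝ φ U) (e : JetExpr) :
    AnalyticOnNhd ℝ (e.evalJets φ) U := by
  induction e with
  | jet a b => exact hφ.jet a b
  | const c => exact analyticOnNhd_const
  | add e₁ e₂ ih₁ ih₂ => exact fun z hz => (ih₁ z hz).add (ih₂ z hz)
  | mul e₁ e₂ ih₁ ih₂ => exact fun z hz => (ih₁ z hz).mul (ih₂ z hz)
  | exp e ih => exact fun z hz => (ih z hz).rexp

theorem dirDeriv_evalJets (hφ : AnalyticOnNhd ℝ φ U) {v : ℂ}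
    {d : ℕ → ℕ → JetExpr}
    (hd : ∀ a b, EqOn (dirDeriv v (_root_.jet a b φ)) ((d a b).evalJets φ) U)
    (e : JetExpr) : EqOn (dirDeriv v (e.evalJets φ)) ((derive d e).evalJets φ) U := by
  have hdiff : ∀ e : JetExpr, ∀ z ∈ U, DifferentiableAt ℝ (e.evalJets φ) z := fun e z hz =>
    (analyticOnNhd_evalJets hφ e z hz).differentiableAt
  induction e with
  | jet a b => exact hd a b
  | const c => exact fun z _ => dirDeriv_const v c z
  | add e₁ e₂ ih₁ ih₂ =>
    intro z hz
    exact (dirDeriv_add (hdiff e₁ z hz) (hdiff e₂ z hz) v).trans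
      (congrArg₂ (· + ·) (ih₁ hz) (ih₂ hz))
  | mul e₁ e₂ ih₁ ih₂ =>
    intro z hz
    exact (dirDeriv_mul (hdiff e₁ z hz) (hdiff e₂ z hz) v).trans
      (congrArg₂ (· + ·) (congrArg (· * _) (ih₁ hz)) (congrArg (_ * ·) (ih₂ hz)))
  | exp e ih =>
    intro z hz
    exact (dirDeriv_exp (hdiff e z hz) v).trans (congrArg (_ * ·) (ih hz))

theorem iterate_dirDeriv_evalJets (hU : IsOpen U) (hφ : AnalyticOnNhd ℝ φ U) {v : ℂ}
    {d : ℕ → ℕ → JetExpr}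
    (hd : ∀ a b, EqOn (dirDeriv v (_root_.jet a b φ)) ((d a b).evalJets φ) U)
    (e : JetExpr) (n : ℕ) :
    EqOn ((dirDeriv v)^[n] (e.evalJets φ)) (((derive d)^[n] e).evalJets φ) U := by
  induction n with
  | zero => exact fun _ _ => rfl
  | succ n ih =>
    intro z hz
    rw [Function.iterate_succ_apply', Function.iterate_succ_apply',
      eqOn_dirDeriv hU ih v hz, dirDeriv_evalJets hφ hd _ hz]

theorem iterate_dirDeriv_evalJets_dx (hU : IsOpen U) (hφ : AnalyticOnNhd ℝ φ U) (e : JetExpr)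
    (n : ℕ) : EqOn ((dirDeriv 1)^[n] (e.evalJets φ)) ((dx^[n] e).evalJets φ) U :=
  iterate_dirDeriv_evalJets hU hφ (fun a b _ _ => congrFun (dirDeriv_one_jet a b φ) _) e n

theorem iterate_dirDeriv_evalJets_dy (hU : IsOpen U) (hφ : AnalyticOnNhd ℝ φ U) (e : JetExpr)
    (n : ℕ) : EqOn ((dirDeriv Complex.I)^[n] (e.evalJets φ)) ((dy^[n] e).evalJets φ) U :=
  iterate_dirDeriv_evalJets hU hφ (dirDeriv_I_jet hU hφ) e n

theorem iterate_dirDeriv_evalJets_dDir (hU : IsOpen U) (hφ : AnalyticOnNhd ℝ φ U) (v : ℂ)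
    (e : JetExpr) (n : ℕ) :
    EqOn ((dirDeriv v)^[n] (e.evalJets φ)) (((dDir v)^[n] e).evalJets φ) U :=
  iterate_dirDeriv_evalJets hU hφ (fun a b z hz => by
    rw [dirDeriv_eq_re_mul_add_im_mul, dirDeriv_one_jet, dirDeriv_I_jet hU hφ a b hz]; rfl) e n

theorem lapR_evalJets (hU : IsOpen U) (hφ : AnalyticOnNhd ℝ φ U) (e : JetExpr) :
    EqOn (lapR (e.evalJets φ)) (e.lap.evalJets φ) U := fun _ hz =>
  congrArg₂ (· + ·) (iterate_dirDeriv_evalJets_dx hU hφ e 2 hz)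
    (iterate_dirDeriv_evalJets_dy hU hφ e 2 hz)

noncomputable def conformalWeight : JetExpr := exp (mul (const (-2)) (jet 0 0))

noncomputable def obsPDE : JetExpr :=
  add (lap (mul conformalWeight (lap (mul conformalWeight (lap (jet 0 0))))))
    (mul (const (-1)) (lap (mul (mul conformalWeight conformalWeight)
      (mul (lap (jet 0 0)) (lap (jet 0 0))))))

/-- The equation is noncharacteristic for `y = 0`: it is affine in `∂ᵧ⁶ φ` with coefficient
`e^{-4φ}`, and `truncY 5` removes the only jet of `y`-order above `5` that occurs. -/
theorem eval_obsPDE (J : ℕ → ℕ → ℝ) :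
    obsPDE.eval J =
      Real.exp (-2 * J 0 0) * Real.exp (-2 * J 0 0) * J 0 6 + (truncY 5 obsPDE).eval J := by
  simp only [obsPDE, conformalWeight, lap, dx, dy, derive, truncY, eval]
  norm_num [eval]
  ring

end JetExpr

section ObstructionFlat

open JetExpr

variable {U : Set ℂ} {φ : ℂ → ℝ}

theorem lapR_congr (hU : IsOpen U) {f g : ℂ → ℝ} (h : EqOn f g U) : EqOn (lapR f) (lapR g) U :=
  fun _ hz => congrArg₂ (· + ·) (eqOn_iterate_dirDeriv hU h 1 2 hz)
    (eqOn_iterate_dirDeriv hU h Complex.I 2 hz)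

theorem obsPDE_eq_evalJets (hU : IsOpen U) (hφ : AnalyticOnNhd ℝ φ U) :
    EqOn (obsPDE φ) (JetExpr.obsPDE.evalJets φ) U := by
  have hlap : EqOn (lapR φ) ((lap (jet 0 0)).evalJets φ) U := lapR_evalJets hU hφ (jet 0 0)
  have hinner : EqOn (fun u => Real.exp (-2 * φ u) * lapR φ u)
      ((mul conformalWeight (lap (jet 0 0))).evalJets φ) U := fun u hu =>
    congrArg (Real.exp (-2 * φ u) * ·) (hlap hu)
  have hfirst : EqOn
      (fun w => Real.exp (-2 * φ w) * lapR (fun u => Real.exp (-2 * φ u) * lapR φ u) w)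
      ((mul conformalWeight (lap (mul conformalWeight (lap (jet 0 0))))).evalJets φ) U :=
    fun w hw => congrArg (Real.exp (-2 * φ w) * ·)
      ((lapR_congr hU hinner hw).trans (lapR_evalJets hU hφ _ hw))
  have hsecond : EqOn (fun w => Real.exp (-4 * φ w) * lapR φ w ^ 2)
      ((mul (mul conformalWeight conformalWeight) (mul (lap (jet 0 0)) (lap (jet 0 0)))).evalJets φ)
      U := fun w hw => by
    change _ = Real.exp (-2 * φ w) * Real.exp (-2 * φ w) *
      ((lap (jet 0 0)).evalJets φ w * (lap (jet 0 0)).evalJets φ w)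
    rw [← hlap hw, ← Real.exp_add]
    ring_nf
  intro z hz
  change lapR _ z - lapR _ z = (lap _).evalJets φ z + -1 * (lap _).evalJets φ z
  rw [lapR_congr hU hfirst hz, lapR_evalJets hU hφ _ hz, lapR_congr hU hsecond hz,
    lapR_evalJets hU hφ _ hz]
  ring

noncomputable def JetExpr.obsPDENormalForm : JetExpr :=
  mul (const (-1)) (mul (exp (mul (const 4) (jet 0 0))) (truncY 5 JetExpr.obsPDE))

theorem yOrder_obsPDENormalForm : obsPDENormalForm.yOrder < 6 := by
  have := yOrder_truncY_le 5 JetExpr.obsPDE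
  simp only [obsPDENormalForm, yOrder]
  omega

theorem jet_zero_six_eqOn_of_obsPDE (hU : IsOpen U) (hφ : AnalyticOnNhd ℝ φ U)
    (hpde : ∀ z ∈ U, obsPDE φ z = 0) : EqOn (jet 0 6 φ) (obsPDENormalForm.evalJets φ) U := by
  intro z hz
  have hzero : JetExpr.obsPDE.eval (fun a b => jet a b φ z) = 0 :=
    (obsPDE_eq_evalJets hU hφ hz).symm.trans (hpde z hz)
  have hsplit := eval_obsPDE fun a b => jet a b φ z
  have hexp : Real.exp (4 * jet 0 0 φ z) *
      (Real.exp (-2 * jet 0 0 φ z) * Real.exp (-2 * jet 0 0 φ z)) = 1 := by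
    rw [← Real.exp_add, ← Real.exp_add]
    ring_nf
    exact Real.exp_zero
  change _ = -1 * (Real.exp (4 * jet 0 0 φ z) * (truncY 5 JetExpr.obsPDE).eval _)
  linear_combination Real.exp (4 * jet 0 0 φ z) * (hzero - hsplit) - jet 0 6 φ z * hexp

end ObstructionFlat

section CauchyProblem

open JetExpr

variable {U : Set ℂ} {φ φ₁ φ₂ : ℂ → ℝ} {I : Set ℝ}

theorem jet_eq_of_jet_zero_eq (hI : IsOpen I) (hIU : ∀ x ∈ I, (x : ℂ) ∈ U)
    (h₁ : AnalyticOnNhd ℝ φ₁ U) (h₂ : AnalyticOnNhd ℝ φ₂ U) {b : ℕ}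
    (h : ∀ x ∈ I, jet 0 b φ₁ x = jet 0 b φ₂ x) (a : ℕ) :
    ∀ x ∈ I, jet a b φ₁ x = jet a b φ₂ x := by
  induction a with
  | zero => exact h
  | succ a ih =>
    intro x hx
    rw [← dirDeriv_one_jet, ← dirDeriv_one_jet]
    exact dirDeriv_one_eq_of_eqOn_ofReal hI ih hx (h₁.jet a b x (hIU x hx)).differentiableAt
      (h₂.jet a b x (hIU x hx)).differentiableAt

theorem jet_eqOn_of_jet_zero_eqOn (hU : IsOpen U) (hφ : AnalyticOnNhd ℝ φ U) {k : ℕ}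
    {e : JetExpr} (he : EqOn (jet 0 k φ) (e.evalJets φ) U) (a m : ℕ) :
    EqOn (jet a (k + m) φ) ((dx^[a] (dy^[m] e)).evalJets φ) U := by
  have hy : EqOn ((dirDeriv Complex.I)^[k + m] φ) ((dy^[m] e).evalJets φ) U := by
    rw [add_comm, Function.iterate_add_apply]
    exact fun z hz => (eqOn_iterate_dirDeriv hU he _ m hz).trans
      (iterate_dirDeriv_evalJets_dy hU hφ e m hz)
  exact fun z hz => (eqOn_iterate_dirDeriv hU hy 1 a hz).trans
    (iterate_dirDeriv_evalJets_dx hU hφ _ a hz)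

theorem jet_eq_of_cauchyData (hU : IsOpen U) (hI : IsOpen I) (hIU : ∀ x ∈ I, (x : ℂ) ∈ U)
    (h₁ : AnalyticOnNhd ℝ φ₁ U) (h₂ : AnalyticOnNhd ℝ φ₂ U) {k : ℕ} {e : JetExpr}
    (he : e.yOrder < k) (he₁ : EqOn (jet 0 k φ₁) (e.evalJets φ₁) U)
    (he₂ : EqOn (jet 0 k φ₂) (e.evalJets φ₂) U)
    (hdata : ∀ j < k, ∀ x ∈ I, jet 0 j φ₁ x = jet 0 j φ₂ x) (a b : ℕ) :
    ∀ x ∈ I, jet a b φ₁ x = jet a b φ₂ x := by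
  induction b using Nat.strong_induction_on generalizing a with
  | _ b ih =>
  rcases lt_or_ge b k with hb | hb
  · exact jet_eq_of_jet_zero_eq hI hIU h₁ h₂ (hdata b hb) a
  obtain ⟨m, rfl⟩ := Nat.exists_eq_add_of_le hb
  intro x hx
  rw [jet_eqOn_of_jet_zero_eqOn hU h₁ he₁ a m (hIU x hx),
    jet_eqOn_of_jet_zero_eqOn hU h₂ he₂ a m (hIU x hx)]
  have hord : (dx^[a] (dy^[m] e)).yOrder ≤ e.yOrder + m :=
    (yOrder_iterate_dx_le _ a).trans (yOrder_iterate_dy_le e m)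
  exact eval_congr_of_yOrder_le hord fun a' b' hb' => ih b' (by omega) a' x hx

theorem eventuallyEq_of_jet_eq (hU : IsOpen U) (h₁ : AnalyticOnNhd ℝ φ₁ U)
    (h₂ : AnalyticOnNhd ℝ φ₂ U) {z₀ : ℂ} (hz₀ : z₀ ∈ U)
    (h : ∀ a b, jet a b φ₁ z₀ = jet a b φ₂ z₀) : φ₁ =ᶠ[𝓝 z₀] φ₂ := by
  have hdiag : ∀ {φ : ℂ → ℝ}, AnalyticOnNhd ℝ φ U → ∀ n v,
      (iteratedFDeriv ℝ n φ z₀ fun _ => v) = ((dDir v)^[n] (jet 0 0)).evalJets φ z₀ :=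
    fun hφ n v => (hφ.iteratedFDeriv_apply_const hU v n hz₀).trans
      (iterate_dirDeriv_evalJets_dDir hU hφ v (jet 0 0) n hz₀)
  refine (h₁ z₀ hz₀).eventuallyEq_of_iteratedFDeriv_apply_const_eq (h₂ z₀ hz₀) fun n v => ?_
  rw [hdiag h₁, hdiag h₂]
  exact congrArg (eval · _) (funext₂ h)

end CauchyProblem

theorem obstruction_flat_cauchy_uniqueness_general (U : Set ℂ) (hUopen : IsOpen U)
    (hU0 : (0 : ℂ) ∈ U)
    (φ₁ φ₂ : ℂ → ℝ) (h₁ : AnalyticOnNhd ℝ φ₁ U) (h₂ : AnalyticOnNhd ℝ φ₂ U)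
    (hpde₁ : ∀ z ∈ U, obsPDE φ₁ z = 0) (hpde₂ : ∀ z ∈ U, obsPDE φ₂ z = 0)
    (I : Set ℝ) (hIopen : IsOpen I) (hI0 : (0 : ℝ) ∈ I)
    (hIU : ∀ x ∈ I, (x : ℂ) ∈ U)
    (hdata : ∀ j : Fin 6, ∀ x ∈ I,
      (pdyR^[(j : ℕ)] φ₁) (x : ℂ) = (pdyR^[(j : ℕ)] φ₂) (x : ℂ)) :
    ∃ V : Set ℂ, IsOpen V ∧ (0 : ℂ) ∈ V ∧ ∀ z ∈ V, φ₁ z = φ₂ z := by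
  have hjets : ∀ a b, jet a b φ₁ 0 = jet a b φ₂ 0 := fun a b => by
    simpa using jet_eq_of_cauchyData hUopen hIopen hIU h₁ h₂ yOrder_obsPDENormalForm
      (jet_zero_six_eqOn_of_obsPDE hUopen h₁ hpde₁) (jet_zero_six_eqOn_of_obsPDE hUopen h₂ hpde₂)
      (fun j hj => hdata ⟨j, hj⟩) a b 0 hI0
  obtain ⟨V, hV, hVopen, hV0⟩ :=
    eventually_nhds_iff.1 (eventuallyEq_of_jet_eq hUopen h₁ h₂ hU0 hjets)
  exact ⟨V, hVopen, hV0, hV⟩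

/-- injectivity in Lemma 4.5 of the paper, via Cauchy–Kowalevski: two real
analytic solutions of the sixth-order obstruction-flatness PDE with the same 6-jet Cauchy data
on the line `{y = 0}` agree near the origin. -/
theorem obstruction_flat_cauchy_uniqueness (U : Set ℂ) (hUopen : IsOpen U)
    (hUconn : IsConnected U) (hU0 : (0 : ℂ) ∈ U)
    (φ₁ φ₂ : ℂ → ℝ) (h₁ : AnalyticOnNhd ℝ φ₁ U) (h₂ : AnalyticOnNhd ℝ φ₂ U)
    (hpde₁ : ∀ z ∈ U, obsPDE φ₁ z = 0) (hpde₂ : ∀ z ∈ U, obsPDE φ₂ z = 0)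
    (I : Set ℝ) (hIopen : IsOpen I) (hI0 : (0 : ℝ) ∈ I) (hIint : I.OrdConnected)
    (hIU : ∀ x ∈ I, (x : ℂ) ∈ U)
    (hdata : ∀ j : Fin 6, ∀ x ∈ I,
      (pdyR^[(j : ℕ)] φ₁) (x : ℂ) = (pdyR^[(j : ℕ)] φ₂) (x : ℂ)) :
    ∃ V : Set ℂ, IsOpen V ∧ (0 : ℂ) ∈ V ∧ ∀ z ∈ V, φ₁ z = φ₂ z :=
  obstruction_flat_cauchy_uniqueness_general U hUopen hU0 φ₁ φ₂ h₁ h₂ hpde₁ hpde₂ I hIopen hI0 hIU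
    hdata
end

section
/- There exist an open neighborhood U of 0 in ℂ ≅ ℝ² and a real analytic function φ : U → ℝ such that, with K := −2 e^{−2φ} ∂_z∂_{z̄}φ, K_{;z̄z̄} := ∂_{z̄}²K − 2(∂_{z̄}φ)(∂_{z̄}K), K_{;z̄z̄z} := ∂_z K_{;z̄z̄}, and K_{;z̄z̄zz} := ∂_z K_{;z̄z̄z} − 2(∂_zφ) K_{;z̄z̄z}, one has K_{;z̄z̄zz} ≡ 0 on U, while K_{;z̄z̄} does not vanish identically on any open neighborhood of 0 contained in U. -/
open Complex
open scoped ContDiff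

lemma key {f : ℂ → ℂ} {g : ℝ → ℂ} {c : ℂ} {z : ℂ}
    (hf : f =ᶠ[nhds z] fun w => g w.re) (hg : HasDerivAt g c z.re) :
    pdz f z = c / 2 ∧ pdzbar f z = c / 2 := by
  have h1 : HasFDerivAt (fun w : ℂ => g w.re)
      ((ContinuousLinearMap.smulRight (1 : ℝ →L[ℝ] ℝ) c).comp Complex.reCLM) z :=
    hg.hasFDerivAt.comp z Complex.reCLM.hasFDerivAt
  have h2 : fderiv ℝ f z
      = (ContinuousLinearMap.smulRight (1 : ℝ →L[ℝ] ℝ) c).comp Complex.reCLM := by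
    rw [hf.fderiv_eq, h1.fderiv]
  constructor <;> · simp [pdz, pdzbar, pdx, pdy, h2]; ring

noncomputable def phiEx : ℂ → ℝ := fun z => -2 * Real.log (1/2 - z.re)

def Uex : Set ℂ := {z | z.re < 1/2}

lemma Uex_open : IsOpen Uex := isOpen_lt (Complex.continuous_re) continuous_const

lemma Uex_pos {z : ℂ} (hz : z ∈ Uex) : (0:ℝ) < 1/2 - z.re := sub_pos.mpr hz

lemma eev {h g : ℂ → ℂ} {z : ℂ} (hz : z ∈ Uex)
    (he : ∀ w ∈ Uex, h w = g w) : h =ᶠ[nhds z] g :=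
  Filter.eventuallyEq_of_mem (Uex_open.mem_nhds hz) he

lemma hd0 (x : ℝ) : HasDerivAt (fun t : ℝ => 1/2 - t) (-1) x := by
  have h := (hasDerivAt_const x (1/2 : ℝ)).sub (hasDerivAt_id x)
  have h2 : (0 : ℝ) - 1 = -1 := by norm_num
  rw [h2] at h
  exact h

-- Step 1 : derivatives of phiC phiEx
lemma step1 {z : ℂ} (hz : z ∈ Uex) :
    pdz (phiC phiEx) z = ((1/2 - z.re : ℝ) : ℂ)⁻¹ ∧
    pdzbar (phiC phiEx) z = ((1/2 - z.re : ℝ) : ℂ)⁻¹ := by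
  have ha := Uex_pos hz
  have hr : HasDerivAt (fun x : ℝ => -2 * Real.log (1/2 - x))
      (-2 * ((1/2 - z.re)⁻¹ * (-1))) z.re :=
    ((Real.hasDerivAt_log ha.ne').comp z.re (hd0 z.re)).const_mul (-2)
  have hg : HasDerivAt (fun x : ℝ => ((-2 * Real.log (1/2 - x) : ℝ) : ℂ))
      ((-2 * ((1/2 - z.re)⁻¹ * (-1)) : ℝ) : ℂ) z.re := hr.ofReal_comp
  have hf : phiC phiEx =ᶠ[nhds z] fun w => ((-2 * Real.log (1/2 - w.re) : ℝ) : ℂ) :=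
    Filter.EventuallyEq.rfl
  have h := key hf hg
  have hc : ((-2 * ((1/2 - z.re)⁻¹ * (-1)) : ℝ) : ℂ) / 2 = ((1/2 - z.re : ℝ) : ℂ)⁻¹ := by
    push_cast
    ring
  rw [hc] at h
  exact h

-- Step 2 : second mixed derivative of phiC
lemma step2 {z : ℂ} (hz : z ∈ Uex) :
    pdz (pdzbar (phiC phiEx)) z = (((1/2 - z.re)⁻¹^2 : ℝ) : ℂ) / 2 := by
  have ha := Uex_pos hz
  have hr : HasDerivAt (fun x : ℝ => (1/2 - x)⁻¹) ((1/2 - z.re)⁻¹^2) z.re := by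
    have h := (hd0 z.re).inv ha.ne'
    have h2 : - (-1 : ℝ) / (1/2 - z.re)^2 = (1/2 - z.re)⁻¹^2 := by
      field_simp
    rwa [h2] at h
  have hg : HasDerivAt (fun x : ℝ => (((1/2 - x)⁻¹ : ℝ) : ℂ))
      (((1/2 - z.re)⁻¹^2 : ℝ) : ℂ) z.re := hr.ofReal_comp
  have hf : pdzbar (phiC phiEx) =ᶠ[nhds z] fun w => (((1/2 - w.re)⁻¹ : ℝ) : ℂ) :=
    eev hz (fun w hw => by rw [(step1 hw).2, Complex.ofReal_inv])
  exact (key hf hg).1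

-- Step 3 : the Gauss curvature
lemma step3 {z : ℂ} (hz : z ∈ Uex) :
    gaussK phiEx z = ((-(1/2 - z.re)^2 : ℝ) : ℂ) := by
  have ha := Uex_pos hz
  have hexp : Real.exp (-2 * phiEx z) = (1/2 - z.re)^4 := by
    have h1 : -2 * phiEx z = Real.log ((1/2 - z.re)^4) := by
      rw [Real.log_pow, phiEx]
      push_cast
      ring
    rw [h1, Real.exp_log (by positivity)]
  have hne : ((1/2 - z.re : ℝ) : ℂ) ≠ 0 := by exact_mod_cast ha.ne'
  rw [gaussK, hexp, step2 hz, Complex.ofReal_pow, Complex.ofReal_pow,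
    Complex.ofReal_inv, Complex.ofReal_neg, Complex.ofReal_pow]
  set b : ℂ := ((1/2 - z.re : ℝ) : ℂ) with hb
  field_simp

-- Step 4 : pdzbar of K
lemma step4 {z : ℂ} (hz : z ∈ Uex) :
    pdzbar (gaussK phiEx) z = ((1/2 - z.re : ℝ) : ℂ) := by
  have hr : HasDerivAt (fun x : ℝ => -(1/2 - x)^2) (2 * (1/2 - z.re)) z.re := by
    have h := ((hd0 z.re).pow 2).neg
    have h2 : -((2:ℕ) * (1/2 - z.re)^(2-1) * (-1)) = 2 * (1/2 - z.re) := by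
      push_cast
      ring
    rwa [h2] at h
  have hg : HasDerivAt (fun x : ℝ => ((-(1/2 - x)^2 : ℝ) : ℂ))
      ((2 * (1/2 - z.re) : ℝ) : ℂ) z.re := hr.ofReal_comp
  have hf : gaussK phiEx =ᶠ[nhds z] fun w => ((-(1/2 - w.re)^2 : ℝ) : ℂ) :=
    eev hz (fun w hw => step3 hw)
  have h := (key hf hg).2
  rw [h]
  push_cast
  ring

-- Step 5 : pdzbar pdzbar K
lemma step5 {z : ℂ} (hz : z ∈ Uex) :
    pdzbar (pdzbar (gaussK phiEx)) z = -(1/2) := by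
  have hg : HasDerivAt (fun x : ℝ => (((1/2 - x) : ℝ) : ℂ)) ((-1 : ℝ) : ℂ) z.re :=
    (hd0 z.re).ofReal_comp
  have hf : pdzbar (gaussK phiEx) =ᶠ[nhds z] fun w => (((1/2 - w.re) : ℝ) : ℂ) :=
    eev hz (fun w hw => step4 hw)
  have h := (key hf hg).2
  rw [h]
  norm_num

-- Step 6 : Kzb2 is the constant -5/2 on Uex
lemma step6 {z : ℂ} (hz : z ∈ Uex) : Kzb2 phiEx z = -(5/2) := by
  have ha := Uex_pos hz
  have hne : ((1/2 - z.re : ℝ) : ℂ) ≠ 0 := by exact_mod_cast ha.ne'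
  rw [Kzb2, step5 hz, (step1 hz).2, step4 hz]
  set b : ℂ := ((1/2 - z.re : ℝ) : ℂ) with hb
  field_simp
  ring

-- Step 7 : Kzb2z vanishes on Uex
lemma step7 {z : ℂ} (hz : z ∈ Uex) : Kzb2z phiEx z = 0 := by
  have hf : Kzb2 phiEx =ᶠ[nhds z] fun _ : ℂ => (-(5/2) : ℂ) :=
    eev hz (fun w hw => step6 hw)
  have h := (key hf (hasDerivAt_const z.re (-(5/2) : ℂ))).1
  rw [Kzb2z, h]
  norm_num

-- Step 8 : Kzb2z2 vanishes on Uex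
lemma step8 {z : ℂ} (hz : z ∈ Uex) : Kzb2z2 phiEx z = 0 := by
  have hf : Kzb2z phiEx =ᶠ[nhds z] fun _ : ℂ => (0 : ℂ) :=
    eev hz (fun w hw => step7 hw)
  have h := (key hf (hasDerivAt_const z.re (0 : ℂ))).1
  rw [Kzb2z2, h, step7 hz]
  norm_num

-- analyticity
lemma phiEx_analytic : AnalyticOnNhd ℝ phiEx Uex := by
  intro z hz
  have ha := Uex_pos hz
  have h1 : AnalyticAt ℝ (fun w : ℂ => (1/2 - w.re : ℝ)) z :=
    (analyticAt_const).sub (Complex.reCLM.analyticAt z)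
  have h2 : AnalyticAt ℝ (fun x : ℝ => Real.log x) ((fun w : ℂ => (1/2 - w.re : ℝ)) z) := by
    have hc : AnalyticAt ℂ Complex.log ((1/2 - z.re : ℝ) : ℂ) :=
      analyticAt_clog (Complex.ofReal_mem_slitPlane.mpr ha)
    have h3 : AnalyticAt ℝ (fun x : ℝ => (Complex.log ((x : ℂ))).re) (1/2 - z.re) :=
      (Complex.reCLM.analyticAt _).comp
        ((hc.restrictScalars).comp (Complex.ofRealCLM.analyticAt _))
    have hEq : (fun x : ℝ => Real.log x) = fun x : ℝ => (Complex.log ((x : ℂ))).re := by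
      funext x
      rw [Complex.log_ofReal_re]
    rw [hEq]
    exact h3
  have hcomp : AnalyticAt ℝ ((fun x : ℝ => Real.log x) ∘ (fun w : ℂ => (1/2 - w.re : ℝ))) z :=
    AnalyticAt.comp (f := fun w : ℂ => (1/2 - w.re : ℝ)) h2 h1
  exact (analyticAt_const.mul hcomp :
    AnalyticAt ℝ (fun w : ℂ => -2 * Real.log (1/2 - w.re)) z)


/-- Theorem 4.1 of the paper, analytic content: there is a real analytic
`φ` near `0 ∈ ℂ` whose metric `g = 2e^{2φ}|dz|²` is obstruction flat (`K_{;z̄z̄zz} ≡ 0`) but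
not spherical near `0` (`K_{;z̄z̄}` vanishes identically on no neighborhood of `0`). -/
theorem exists_obstruction_flat_nonspherical :
    ∃ U : Set ℂ, IsOpen U ∧ (0 : ℂ) ∈ U ∧
      ∃ φ : ℂ → ℝ, AnalyticOnNhd ℝ φ U ∧ (∀ z ∈ U, Kzb2z2 φ z = 0) ∧
        ∀ V : Set ℂ, IsOpen V → (0 : ℂ) ∈ V → V ⊆ U → ∃ z ∈ V, Kzb2 φ z ≠ 0 := by
  refine ⟨Uex, Uex_open, show (0:ℂ).re < 1/2 by norm_num, phiEx, phiEx_analytic,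
    fun z hz => step8 hz, fun V _ h0 hVU => ⟨0, h0, ?_⟩⟩
  rw [step6 (hVU h0)]
  norm_num
end
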